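/- arXiv:2109.03003 — 3 statements merged into one kernel-verified Lean document; each statement's English description precedes it below -/
import Mathlib

section
/- Let $V, W : \mathbb{R}^n \to \mathbb{R}^n$ be smooth vector fields where $W$ has a tridiagonal Jacobian structure: $\partial W_i / \partial x_j = 0$ whenever $|i - j| > 1$, with $\partial W_i / \partial x_{i-1}(x) = g_{i,i-1}(x)$. Define the sequence $b^1 = h \cdot e_1$ (for a smooth scalar function $h$ and $e_1$ the first standard basis vector) and $b^{k+1} = [b^k, W]$ (Lie bracket). Then for every $k$ and every $x$: $b^k_i(x) = 0$ for all $i > k$, and $b^k_k(x) = h(x) \prod_{i=2}^{k} g_{i,i-1}(x)$. -/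
open Finset

/-- Lie bracket of two vector fields on `ℝⁿ`: `[V,W](x) = DW(x)V(x) - DV(x)W(x)`. -/
noncomputable def lieB {n : ℕ} (V W : (Fin n → ℝ) → (Fin n → ℝ)) :
    (Fin n → ℝ) → (Fin n → ℝ) :=
  fun x => fderiv ℝ W x (V x) - fderiv ℝ V x (W x)

/-- The bracket sequence `b¹ = h·e₁`, `b^{k+1} = [bᵏ, W]`. -/
noncomputable def bseq {n : ℕ} (hn : 0 < n) (h : (Fin n → ℝ) → ℝ)
    (W : (Fin n → ℝ) → (Fin n → ℝ)) : ℕ → (Fin n → ℝ) → (Fin n → ℝ)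
  | 0 => fun _ => 0
  | 1 => fun x => h x • (Pi.single (⟨0, hn⟩ : Fin n) (1:ℝ) : Fin n → ℝ)
  | (k+2) => lieB (bseq hn h W (k+1)) W

lemma lieB_contDiff {n : ℕ} {V W : (Fin n → ℝ) → (Fin n → ℝ)}
    (hV : ContDiff ℝ (⊤ : ℕ∞) V) (hW : ContDiff ℝ (⊤ : ℕ∞) W) : ContDiff ℝ (⊤ : ℕ∞) (lieB V W) := by
  unfold lieB
  exact ((hW.fderiv_right (by simp)).clm_apply hV).sub ((hV.fderiv_right (by simp)).clm_apply hW)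

lemma bseq_contDiff {n : ℕ} (hn : 0 < n) {h : (Fin n → ℝ) → ℝ}
    {W : (Fin n → ℝ) → (Fin n → ℝ)} (hh : ContDiff ℝ (⊤ : ℕ∞) h) (hW : ContDiff ℝ (⊤ : ℕ∞) W) :
    ∀ k, ContDiff ℝ (⊤ : ℕ∞) (bseq hn h W k)
  | 0 => contDiff_const
  | 1 => hh.smul contDiff_const
  | (k+2) => lieB_contDiff (bseq_contDiff hn hh hW (k+1)) hW

lemma fderiv_coord {n : ℕ} {f : (Fin n → ℝ) → (Fin n → ℝ)} {x : Fin n → ℝ}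
    (hf : DifferentiableAt ℝ f x) (v : Fin n → ℝ) (i : Fin n) :
    fderiv ℝ f x v i = fderiv ℝ (fun y => f y i) x v := by
  have hc : (fun y => f y i) = (ContinuousLinearMap.proj i : (Fin n → ℝ) →L[ℝ] ℝ) ∘ f := rfl
  rw [hc, fderiv_comp x (ContinuousLinearMap.proj i).differentiableAt hf,
    ContinuousLinearMap.fderiv]
  rfl

lemma clm_expand {n : ℕ} (L : (Fin n → ℝ) →L[ℝ] ℝ) (v : Fin n → ℝ) :
    L v = ∑ j, v j * L (Pi.single j 1) := by
  have hv : v = ∑ j, v j • (Pi.single j 1 : Fin n → ℝ) := by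
    funext i
    simp [Finset.sum_apply, Pi.single_apply]
  conv_lhs => rw [hv]
  simp [map_sum]

/-- lower-triangular propagation of brackets against a vector field with
tridiagonal Jacobian. Coordinate `i : Fin n` corresponds to species `i.val + 1`. -/
theorem stmt3 (n : ℕ) (hn : 0 < n)
    (W : (Fin n → ℝ) → (Fin n → ℝ)) (hW : ContDiff ℝ (⊤ : ℕ∞) W)
    (h : (Fin n → ℝ) → ℝ) (hh : ContDiff ℝ (⊤ : ℕ∞) h)
    (g : ℕ → (Fin n → ℝ) → ℝ)
    (htri : ∀ (x : Fin n → ℝ) (i j : Fin n), (i.val + 1 < j.val ∨ j.val + 1 < i.val) →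
      fderiv ℝ (fun y => W y i) x (Pi.single j 1) = 0)
    (hg : ∀ (x : Fin n → ℝ) (i j : Fin n), i.val = j.val + 1 →
      fderiv ℝ (fun y => W y i) x (Pi.single j 1) = g (i.val + 1) x) :
    ∀ k, 1 ≤ k → ∀ x : Fin n → ℝ,
      (∀ i : Fin n, k ≤ i.val → bseq hn h W k x i = 0) ∧
      (∀ i : Fin n, i.val + 1 = k →
        bseq hn h W k x i = h x * ∏ j ∈ Finset.Icc 2 k, g j x) := by
  refine Nat.le_induction ?_ ?_
  · -- base case k = 1
    intro x
    constructor
    · intro i hi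
      simp only [bseq, Pi.smul_apply, Pi.single_apply, smul_eq_mul]
      rw [if_neg]
      · ring
      · intro hcon
        rw [hcon] at hi
        simp at hi
    · intro i hi
      have hi0 : i = ⟨0, hn⟩ := by
        apply Fin.ext
        simpa using hi
      simp [bseq, hi0, Pi.single_apply]
  · -- inductive step
    intro k hk IH x
    obtain ⟨m, rfl⟩ := Nat.exists_eq_succ_of_ne_zero (Nat.one_le_iff_ne_zero.mp hk)
    set B := bseq hn h W (m + 1) with hBdef
    have hB : ContDiff ℝ (⊤ : ℕ∞) B := bseq_contDiff hn hh hW (m + 1)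
    have key : ∀ (i : Fin n),
        bseq hn h W (m + 1 + 1) x i =
          ∑ j, B x j * fderiv ℝ (fun y => W y i) x (Pi.single j 1)
            - fderiv ℝ (fun y => B y i) x (W x) := by
      intro i
      have : bseq hn h W (m + 1 + 1) x i
          = fderiv ℝ W x (B x) i - fderiv ℝ B x (W x) i := by
        simp only [bseq, lieB, Pi.sub_apply]
        rfl
      rw [this, fderiv_coord ((hW.differentiable (by simp)) x) _ i,
        fderiv_coord ((hB.differentiable (by simp)) x) _ i,
        clm_expand (fderiv ℝ (fun y => W y i) x) (B x)]
    -- second term vanishes whenever m + 1 ≤ i.val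
    have hsnd : ∀ (i : Fin n), m + 1 ≤ i.val →
        fderiv ℝ (fun y => B y i) x (W x) = 0 := by
      intro i hi
      have hz : (fun y => B y i) = fun _ => (0 : ℝ) := by
        funext y
        exact (IH y).1 i hi
      rw [hz, fderiv_fun_const]
      rfl
    constructor
    · intro i hi
      rw [key i, hsnd i (by omega), sub_zero]
      apply Finset.sum_eq_zero
      intro j _
      by_cases hj : m + 1 ≤ j.val
      · rw [(IH x).1 j hj, zero_mul]
      · rw [htri x i j (Or.inr (by omega)), mul_zero]
    · intro i hi
      have him : i.val = m + 1 := by omega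
      have hmn : m < n := by omega
      rw [key i, hsnd i (by omega), sub_zero]
      rw [Finset.sum_eq_single (⟨m, hmn⟩ : Fin n)]
      · have hgj : fderiv ℝ (fun y => W y i) x (Pi.single (⟨m, hmn⟩ : Fin n) 1)
            = g (i.val + 1) x := hg x i ⟨m, hmn⟩ (by simpa using him)
        rw [hgj, (IH x).2 ⟨m, hmn⟩ (by simp), him]
        rw [Finset.prod_Icc_succ_top (by omega : 2 ≤ m + 1 + 1)]
        ring
      · intro j _ hj
        by_cases hjm : m + 1 ≤ j.val
        · rw [(IH x).1 j hjm, zero_mul]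
        · have : j.val + 1 < i.val := by
            rcases Nat.lt_or_ge j.val m with hlt | hge
            · omega
            · exfalso
              exact hj (Fin.ext (show j.val = m by omega))
          rw [htri x i j (Or.inr this), mul_zero]
      · intro hcon
        exact absurd (Finset.mem_univ _) hcon
end

section
/- Let $q^{*k} \in \mathbb{R}^k$ and $q^{*(k+1)} \in \mathbb{R}^{k+1}$ be the (unique) equilibria of the averaged food chain restricted to the first $k$ and $k+1$ species respectively. If $q^{*(k+1)}$ is positive (all coordinates $> 0$), then $q^{*k}$ is also positive. -/
open Finset

/-- The Lotka–Volterra food chain per-capita growth rates, indexed by species `i ∈ {1,…,n}`. -/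
noncomputable def Fchain (n : ℕ) (a : ℕ → ℕ → ℝ) (x : ℕ → ℝ) (i : ℕ) : ℝ :=
  if i = 1 then a 1 0 - a 1 1 * x 1 - a 1 2 * x 2
  else if i = n then -a n 0 + a n (n-1) * x (n-1) - a n n * x n
  else -a i 0 + a i (i-1) * x (i-1) - a i i * x i - a i (i+1) * x (i+1)

/-- Sign conditions on the coefficients of the food chain. -/
structure FoodChainCoeffs (n : ℕ) (a : ℕ → ℕ → ℝ) : Prop where
  h10 : 0 < a 1 0
  h11 : 0 < a 1 1
  hdeath : ∀ i, 2 ≤ i → i ≤ n → 0 < a i 0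
  hpred : ∀ i, 2 ≤ i → i ≤ n → 0 < a i (i-1)
  hhunt : ∀ i, 1 ≤ i → i < n → 0 < a i (i+1)
  hcomp : ∀ i, 1 ≤ i → i ≤ n → 0 ≤ a i i

/-- Weights `ε_1 = 1`, `ε_i = ∏_{k=2}^i a_{k-1,k}/a_{k,k-1}`. -/
noncomputable def wt (a : ℕ → ℕ → ℝ) (i : ℕ) : ℝ :=
  ∏ k ∈ Finset.Icc 2 i, a (k-1) k / a k (k-1)

/-- The weighted total population `S(x) = ∑_{i=1}^n ε_i x_i`. -/
noncomputable def Sfun (n : ℕ) (a : ℕ → ℕ → ℝ) (x : ℕ → ℝ) : ℝ :=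
  ∑ i ∈ Finset.Icc 1 n, wt a i * x i

/-- The food chain field restricted to `k` species, viewed on `Fin k → ℝ`;
coordinate `i : Fin k` is species `i.val + 1`. -/
noncomputable def Ffin (n : ℕ) (a : ℕ → ℕ → ℝ) (x : Fin n → ℝ) (i : Fin n) : ℝ :=
  Fchain n a (fun j => if h : 1 ≤ j ∧ j ≤ n then x ⟨j - 1, by omega⟩ else 0) (i.val + 1)


private lemma signpat (k : ℕ) (a : ℕ → ℕ → ℝ) (d : ℕ → ℝ)
    (h11 : 0 < a 1 1) (h12 : 0 < a 1 2)
    (hpred : ∀ i, 2 ≤ i → i + 1 ≤ k → 0 < a i (i-1))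
    (hhunt : ∀ i, 2 ≤ i → i + 1 ≤ k → 0 < a i (i+1))
    (hcomp : ∀ i, 2 ≤ i → i + 1 ≤ k → 0 ≤ a i i)
    (h1 : a 1 1 * d 1 + a 1 2 * d 2 = 0)
    (hrec : ∀ i, 2 ≤ i → i + 1 ≤ k →
      a i (i-1) * d (i-1) - a i i * d i - a i (i+1) * d (i+1) = 0)
    (hd1 : 0 < d 1) :
    ∀ i, 1 ≤ i → i ≤ k → (i % 2 = 1 → 0 < d i) ∧ (i % 2 = 0 → d i < 0) := by
  intro i
  induction i using Nat.strong_induction_on with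
  | _ i ih =>
    intro hi1 hik
    match i, hi1 with
    | 1, _ =>
      exact ⟨fun _ => hd1, fun h => by omega⟩
    | 2, _ =>
      refine ⟨fun h => by omega, fun _ => ?_⟩
      by_contra h'
      push_neg at h'
      nlinarith [mul_pos h11 hd1, mul_nonneg h12.le h']
    | (m+3), _ =>
      have heq := hrec (m+2) (by omega) (by omega)
      have e1 : m+2-1 = m+1 := rfl
      have e2 : m+2+1 = m+3 := rfl
      rw [e1, e2] at heq
      have ih1 := ih (m+1) (by omega) (by omega) (by omega)
      have ih2 := ih (m+2) (by omega) (by omega) (by omega)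
      have hpr := hpred (m+2) (by omega) (by omega)
      rw [e1] at hpr
      have hhu := hhunt (m+2) (by omega) (by omega)
      rw [e2] at hhu
      have hco := hcomp (m+2) (by omega) (by omega)
      constructor
      · intro hodd
        have hdm1 : 0 < d (m+1) := ih1.1 (by omega)
        have hdm2 : d (m+2) < 0 := ih2.2 (by omega)
        by_contra h'
        push_neg at h'
        nlinarith [mul_pos hpr hdm1, mul_nonneg hco (neg_nonneg.mpr hdm2.le),
          mul_nonneg hhu.le (neg_nonneg.mpr h')]
      · intro heven
        have hdm1 : d (m+1) < 0 := ih1.2 (by omega)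
        have hdm2 : 0 < d (m+2) := ih2.1 (by omega)
        by_contra h'
        push_neg at h'
        nlinarith [mul_nonneg hpr.le (neg_nonneg.mpr hdm1.le),
          mul_nonneg hco hdm2.le, mul_nonneg hhu.le h']

private lemma allzero (k : ℕ) (a : ℕ → ℕ → ℝ) (d : ℕ → ℝ)
    (h12 : a 1 2 ≠ 0)
    (hhunt : ∀ i, 2 ≤ i → i + 1 ≤ k → a i (i+1) ≠ 0)
    (h1 : a 1 1 * d 1 + a 1 2 * d 2 = 0)
    (hrec : ∀ i, 2 ≤ i → i + 1 ≤ k →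
      a i (i-1) * d (i-1) - a i i * d i - a i (i+1) * d (i+1) = 0)
    (hd1 : d 1 = 0) :
    ∀ i, 1 ≤ i → i ≤ k → d i = 0 := by
  intro i
  induction i using Nat.strong_induction_on with
  | _ i ih =>
    intro hi1 hik
    match i, hi1 with
    | 1, _ => exact hd1
    | 2, _ =>
      have h' : a 1 2 * d 2 = 0 := by rw [hd1] at h1; linarith
      rcases mul_eq_zero.mp h' with h | h
      · exact absurd h h12
      · exact h
    | (m+3), _ =>
      have heq := hrec (m+2) (by omega) (by omega)
      have e1 : m+2-1 = m+1 := rfl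
      rw [e1] at heq
      have hz1 : d (m+1) = 0 := ih (m+1) (by omega) (by omega) (by omega)
      have hz2 : d (m+2) = 0 := ih (m+2) (by omega) (by omega) (by omega)
      rw [hz1, hz2] at heq
      have h' : a (m+2) (m+2+1) * d (m+2+1) = 0 := by linarith
      rcases mul_eq_zero.mp h' with h | h
      · exact absurd h (hhunt (m+2) (by omega) (by omega))
      · exact h


private lemma chaintail (k : ℕ) (hk : 2 ≤ k) (a : ℕ → ℕ → ℝ) (Q : ℕ → ℝ)
    (hpred : ∀ i, 2 ≤ i → i ≤ k → 0 < a i (i-1))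
    (hhunt : ∀ i, 2 ≤ i → i + 1 ≤ k → 0 < a i (i+1))
    (hcomp : ∀ i, 2 ≤ i → i ≤ k → 0 ≤ a i i)
    (hdeath : ∀ i, 2 ≤ i → i ≤ k → 0 < a i 0)
    (eqmid : ∀ i, 2 ≤ i → i + 1 ≤ k →
      -a i 0 + a i (i-1) * Q (i-1) - a i i * Q i - a i (i+1) * Q (i+1) = 0)
    (eqlast : -a k 0 + a k (k-1) * Q (k-1) - a k k * Q k = 0)
    (hGOOD : ∀ i, 1 ≤ i → i ≤ k → i % 2 = k % 2 → 0 < Q i) :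
    ∀ i, 1 ≤ i → i ≤ k → 0 < Q i := by
  have hQk : 0 < Q k := hGOOD k (by omega) le_rfl rfl
  have hQkm1 : 0 < Q (k-1) := by
    by_contra h
    push_neg at h
    nlinarith [mul_nonneg (hcomp k hk le_rfl) hQk.le, hdeath k hk le_rfl,
      mul_nonneg (hpred k hk le_rfl).le (neg_nonneg.mpr h)]
  have chain : ∀ n m, 1 ≤ m → m + 2*n = k - 1 → Q m ≤ 0 → False := by
    intro n
    induction n with
    | zero =>
      intro m h1 hm hQm
      have hmk : m = k - 1 := by omega
      rw [hmk] at hQm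
      exact absurd hQkm1 (not_lt.mpr hQm)
    | succ n ih =>
      intro m h1 hm hQm
      have heq := eqmid (m+1) (by omega) (by omega)
      have e1 : m+1-1 = m := rfl
      have e2 : m+1+1 = m+2 := rfl
      rw [e1, e2] at heq
      have hQm1 : 0 < Q (m+1) := hGOOD (m+1) (by omega) (by omega) (by omega)
      have hpr := hpred (m+1) (by omega) (by omega)
      rw [e1] at hpr
      have hhu := hhunt (m+1) (by omega) (by omega)
      rw [e2] at hhu
      have hQm2 : Q (m+2) ≤ 0 := by
        by_contra h
        push_neg at h
        nlinarith [mul_pos hhu h,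
          mul_nonneg (hcomp (m+1) (by omega) (by omega)) hQm1.le,
          mul_nonneg hpr.le (neg_nonneg.mpr hQm),
          hdeath (m+1) (by omega) (by omega)]
      exact ih (m+2) (by omega) (by omega) hQm2
  intro i h1 hik
  by_cases hp : i % 2 = k % 2
  · exact hGOOD i h1 hik hp
  · by_contra h
    push_neg at h
    exact chain ((k-1-i)/2) i h1 (by omega) h

/-- if the `(k+1)`-species equilibrium is positive, so is the `k`-species one. -/
theorem stmt7 (k : ℕ) (hk : 2 ≤ k) (a : ℕ → ℕ → ℝ) (hc : FoodChainCoeffs (k+1) a)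
    (qk : Fin k → ℝ) (hqk : ∀ i, Ffin k a qk i = 0)
    (qk1 : Fin (k+1) → ℝ) (hqk1 : ∀ i, Ffin (k+1) a qk1 i = 0)
    (hpos : ∀ i, 0 < qk1 i) :
    ∀ i, 0 < qk i := by
  set Q : ℕ → ℝ := fun j => if h : 1 ≤ j ∧ j ≤ k then qk ⟨j - 1, by omega⟩ else 0 with hQdef
  set Y : ℕ → ℝ := fun j => if h : 1 ≤ j ∧ j ≤ k + 1 then qk1 ⟨j - 1, by omega⟩ else 0 with hYdef
  have hQ0 : ∀ i : Fin k, Fchain k a Q (i.val + 1) = 0 := fun i => hqk i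
  have hY0 : ∀ i : Fin (k+1), Fchain (k+1) a Y (i.val + 1) = 0 := fun i => hqk1 i
  -- equations for Q
  have eqQ1 : a 1 0 - a 1 1 * Q 1 - a 1 2 * Q 2 = 0 := by
    have h : Fchain k a Q (0 + 1) = 0 := hQ0 ⟨0, by omega⟩
    simp only [Fchain, zero_add, if_pos rfl] at h
    exact h
  have eqQmid : ∀ i, 2 ≤ i → i + 1 ≤ k →
      -a i 0 + a i (i-1) * Q (i-1) - a i i * Q i - a i (i+1) * Q (i+1) = 0 := by
    intro i h2 hik
    have h : Fchain k a Q (i - 1 + 1) = 0 := hQ0 ⟨i - 1, by omega⟩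
    rw [show i - 1 + 1 = i from by omega] at h
    rw [Fchain, if_neg (by omega : ¬ i = 1), if_neg (by omega : ¬ i = k)] at h
    exact h
  have eqQlast : -a k 0 + a k (k-1) * Q (k-1) - a k k * Q k = 0 := by
    have h : Fchain k a Q (k - 1 + 1) = 0 := hQ0 ⟨k - 1, by omega⟩
    rw [show k - 1 + 1 = k from by omega] at h
    rw [Fchain, if_neg (by omega : ¬ k = 1), if_pos rfl] at h
    exact h
  -- equations for Y
  have eqY1 : a 1 0 - a 1 1 * Y 1 - a 1 2 * Y 2 = 0 := by
    have h : Fchain (k+1) a Y (0 + 1) = 0 := hY0 ⟨0, by omega⟩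
    simp only [Fchain, zero_add, if_pos rfl] at h
    exact h
  have eqYmid : ∀ i, 2 ≤ i → i ≤ k →
      -a i 0 + a i (i-1) * Y (i-1) - a i i * Y i - a i (i+1) * Y (i+1) = 0 := by
    intro i h2 hik
    have h : Fchain (k+1) a Y (i - 1 + 1) = 0 := hY0 ⟨i - 1, by omega⟩
    rw [show i - 1 + 1 = i from by omega] at h
    rw [Fchain, if_neg (by omega : ¬ i = 1), if_neg (by omega : ¬ i = k + 1)] at h
    exact h
  -- positivity of Y
  have hYpos : ∀ j, 1 ≤ j → j ≤ k + 1 → 0 < Y j := by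
    intro j h1 h2
    have hY : Y j = qk1 ⟨j - 1, by omega⟩ := by
      simp only [hYdef]
      exact dif_pos ⟨h1, h2⟩
    rw [hY]; exact hpos _
  -- difference relations
  have hd1rel : a 1 1 * (Q 1 - Y 1) + a 1 2 * (Q 2 - Y 2) = 0 := by linarith
  have hdrec : ∀ i, 2 ≤ i → i + 1 ≤ k →
      a i (i-1) * (Q (i-1) - Y (i-1)) - a i i * (Q i - Y i)
        - a i (i+1) * (Q (i+1) - Y (i+1)) = 0 := by
    intro i h2 hik
    have hq := eqQmid i h2 hik
    have hy := eqYmid i h2 (by omega)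
    ring_nf
    ring_nf at hq hy
    linarith
  have hdk : a k (k-1) * (Q (k-1) - Y (k-1)) - a k k * (Q k - Y k)
      = -(a k (k+1) * Y (k+1)) := by
    have hy := eqYmid k hk le_rfl
    ring_nf
    ring_nf at hy eqQlast
    linarith
  -- coefficient facts
  have h11 := hc.h11
  have h12 : 0 < a 1 2 := hc.hhunt 1 le_rfl (by omega)
  have hprK : ∀ i, 2 ≤ i → i ≤ k → 0 < a i (i-1) := fun i h2 hik => hc.hpred i h2 (by omega)
  have hhuK : ∀ i, 2 ≤ i → i + 1 ≤ k → 0 < a i (i+1) := fun i h2 hik =>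
    hc.hhunt i (by omega) (by omega)
  have hcoK : ∀ i, 2 ≤ i → i ≤ k → 0 ≤ a i i := fun i h2 hik => hc.hcomp i (by omega) (by omega)
  have hdeK : ∀ i, 2 ≤ i → i ≤ k → 0 < a i 0 := fun i h2 hik => hc.hdeath i h2 (by omega)
  have hakk1 : 0 < a k (k+1) := hc.hhunt k (by omega) (by omega)
  have hYk1 : 0 < Y (k+1) := hYpos (k+1) (by omega) le_rfl
  have hakkm1 : 0 < a k (k-1) := hprK k hk le_rfl
  have hakk : 0 ≤ a k k := hcoK k hk le_rfl
  -- the key sign fact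
  have hGOOD : ∀ i, 1 ≤ i → i ≤ k → i % 2 = k % 2 → 0 < Q i := by
    rcases lt_trichotomy (Q 1 - Y 1) 0 with hneg | hzero | hpos1
    · -- apply signpat to Y - Q ; deduce k even
      have sp := signpat k a (fun j => Y j - Q j) h11 h12
        (fun i h2 hik => hprK i h2 (by omega))
        hhuK (fun i h2 hik => hcoK i h2 (by omega))
        (by simpa using by linarith : a 1 1 * (Y 1 - Q 1) + a 1 2 * (Y 2 - Q 2) = 0)
        (by
          intro i h2 hik
          have := hdrec i h2 hik
          show a i (i-1) * (Y (i-1) - Q (i-1)) - a i i * (Y i - Q i)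
            - a i (i+1) * (Y (i+1) - Q (i+1)) = 0
          linarith)
        (by linarith : (0:ℝ) < Y 1 - Q 1)
      have hkeven : k % 2 = 0 := by
        by_contra hke
        have hk1 : k % 2 = 1 := by omega
        have h1 : Y (k-1) - Q (k-1) < 0 := (sp (k-1) (by omega) (by omega)).2 (by omega)
        have h2 : 0 < Y k - Q k := (sp k (by omega) le_rfl).1 hk1
        nlinarith [mul_pos hakkm1 (by linarith : (0:ℝ) < Q (k-1) - Y (k-1)),
          mul_nonneg hakk (by linarith : (0:ℝ) ≤ -(Q k - Y k)),
          mul_pos hakk1 hYk1]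
      intro i h1i hik hp
      have hdi : Y i - Q i < 0 := (sp i h1i hik).2 (by omega)
      have := hYpos i h1i (by omega)
      linarith
    · -- all differences zero: contradiction
      have hz := allzero k a (fun j => Q j - Y j) (ne_of_gt h12)
        (fun i h2 hik => ne_of_gt (hhuK i h2 hik)) hd1rel hdrec hzero
      have z1 : Q (k-1) - Y (k-1) = 0 := hz (k-1) (by omega) (by omega)
      have z2 : Q k - Y k = 0 := hz k (by omega) le_rfl
      exfalso
      nlinarith [mul_pos hakk1 hYk1]
    · -- apply signpat to Q - Y ; deduce k odd
      have sp := signpat k a (fun j => Q j - Y j) h11 h12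
        (fun i h2 hik => hprK i h2 (by omega))
        hhuK (fun i h2 hik => hcoK i h2 (by omega))
        hd1rel hdrec hpos1
      have hkodd : k % 2 = 1 := by
        by_contra hke
        have hk0 : k % 2 = 0 := by omega
        have h1 : 0 < Q (k-1) - Y (k-1) := (sp (k-1) (by omega) (by omega)).1 (by omega)
        have h2 : Q k - Y k < 0 := (sp k (by omega) le_rfl).2 hk0
        nlinarith [mul_pos hakkm1 h1,
          mul_nonneg hakk (by linarith : (0:ℝ) ≤ -(Q k - Y k)),
          mul_pos hakk1 hYk1]
      intro i h1i hik hp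
      have hdi : 0 < Q i - Y i := (sp i h1i hik).1 (by omega)
      have := hYpos i h1i (by omega)
      linarith
  have hall := chaintail k hk a Q hprK hhuK hcoK hdeK eqQmid eqQlast hGOOD
  intro i
  have hQv : qk i = Q (i.val + 1) := by
    simp only [hQdef]
    rw [dif_pos ⟨by omega, by omega⟩]
    congr 1
  rw [hQv]
  exact hall (i.val + 1) (by omega) (by omega)
end

section
/- Let $q^{*k}$ be the unique equilibrium of the averaged food chain restricted to the first $k$ species. Then $q^{*k}$ is positive (i.e., all coordinates $q^{*k}_1, \ldots, q^{*k}_k > 0$) if and only if the last coordinate $q^{*k}_k > 0$. -/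
open Finset

/-- Read backwards, the equilibrium equation of species `i ≥ 2` expresses its prey density as
`a_{i,i-1} x_{i-1} = a_{i0} + a_{ii} x_i + a_{i,i+1} x_{i+1}`, whose right side is positive. -/
theorem pos_prey_of_Fchain_eq_zero {n : ℕ} {a : ℕ → ℕ → ℝ} {x : ℕ → ℝ}
    (hc : FoodChainCoeffs n a) {i : ℕ} (hi : 2 ≤ i) (hin : i ≤ n)
    (hF : Fchain n a x i = 0) (hxi : 0 ≤ x i) (hxs : i < n → 0 ≤ x (i + 1)) :
    0 < x (i - 1) := by
  have hdeath := hc.hdeath i hi hin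
  have hpred := hc.hpred i hi hin
  have hcomp := mul_nonneg (hc.hcomp i (by omega) hin) hxi
  suffices 0 < a i (i - 1) * x (i - 1) from pos_of_mul_pos_right this hpred.le
  rw [Fchain, if_neg (by omega)] at hF
  split_ifs at hF with hn
  · subst hn
    linarith
  · have hhunt := mul_nonneg (hc.hhunt i (by omega) (by omega)).le (hxs (by omega))
    linarith

theorem pos_of_Fchain_eq_zero {n : ℕ} {a : ℕ → ℕ → ℝ} {x : ℕ → ℝ}
    (hc : FoodChainCoeffs n a) (hF : ∀ i, 2 ≤ i → i ≤ n → Fchain n a x i = 0)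
    (hxn : 0 < x n) {j : ℕ} (hj : 1 ≤ j) (hjn : j ≤ n) : 0 < x j := by
  suffices ∀ d j, n - d ≤ j → 1 ≤ j → j ≤ n → 0 < x j from this n j (by omega) hj hjn
  intro d
  induction d with
  | zero =>
    intro j hj _ hjn
    rwa [show j = n by omega]
  | succ d ih =>
    intro j hj hj1 hjn
    by_cases hjd : n - d ≤ j
    · exact ih j hjd hj1 hjn
    have hx := pos_prey_of_Fchain_eq_zero hc (i := j + 1) (by omega) (by omega)
      (hF _ (by omega) (by omega)) (ih _ (by omega) (by omega) (by omega)).le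
      (fun h => (ih _ (by omega) (by omega) h).le)
    simpa using hx

/-- the equilibrium of the first `k` species is positive iff its last
coordinate is positive. -/
theorem stmt8 (k : ℕ) (hk : 2 ≤ k) (a : ℕ → ℕ → ℝ) (hc : FoodChainCoeffs k a)
    (qk : Fin k → ℝ) (hqk : ∀ i, Ffin k a qk i = 0) :
    (∀ i, 0 < qk i) ↔ 0 < qk ⟨k - 1, by omega⟩ := by
  set x : ℕ → ℝ := fun j => if h : 1 ≤ j ∧ j ≤ k then qk ⟨j - 1, by omega⟩ else 0 with hx
  have hqx : ∀ i : Fin k, qk i = x (i + 1) := fun i => by simp [hx]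
  have hF : ∀ i, 2 ≤ i → i ≤ k → Fchain k a x i = 0 := fun i hi hik => by
    have h := hqk ⟨i - 1, by omega⟩
    rwa [Ffin, show i - 1 + 1 = i by omega] at h
  refine ⟨fun hpos => hpos _, fun hlast i => ?_⟩
  rw [hqx] at hlast ⊢
  exact pos_of_Fchain_eq_zero hc hF (by simpa [show k - 1 + 1 = k by omega] using hlast)
    (by omega) (by omega)
end
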